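/- arXiv:2005.01921 — 11 statements merged into one kernel-verified Lean document; each statement's English description precedes it below -/
import Mathlib

section
/- If every system of pairwise intersecting disks in a connected graph G has a common intersection after each radius is increased by α, then for any graph power G^k (k ≥ 1), every system of pairwise intersecting disks in G^k has a common intersection after each radius is increased by ⌈α/k⌉. -/
open SimpleGraph

variable {V : Type*}

/-- `G` is `α`-weakly-Helly: every family of pairwise intersecting disks
`{D_G(v, r v) : v ∈ S}` has a common point after all radii are increased by `α`.
Two disks `D(x,p)`, `D(y,q)` intersect iff `d(x,y) ≤ p + q`. -/
def WeaklyHelly (G : SimpleGraph V) (α : ℕ) : Prop :=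
  ∀ (S : Set V) (r : V → ℕ),
    (∀ x ∈ S, ∀ y ∈ S, G.dist x y ≤ r x + r y) →
    ∃ c : V, ∀ v ∈ S, G.dist v c ≤ r v + α

/-- Eccentricity of `v` with respect to a set `M`: `max_{u ∈ M} d(v,u)`. -/
noncomputable def eccM (G : SimpleGraph V) (M : Set V) (v : V) : ℕ :=
  sSup ((G.dist v) '' M)

/-- `rad_G(M) = min_{v ∈ V} ecc^M(v)`. -/
noncomputable def radM (G : SimpleGraph V) (M : Set V) : ℕ :=
  sInf (Set.range (eccM G M))

/-- Eccentricity of a vertex. -/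
noncomputable def ecc (G : SimpleGraph V) (v : V) : ℕ :=
  sSup (Set.range (G.dist v))

/-- Radius of a graph. -/
noncomputable def grad (G : SimpleGraph V) : ℕ :=
  sInf (Set.range (ecc G))

/-- Diameter of a graph. -/
noncomputable def gdiam (G : SimpleGraph V) : ℕ :=
  sSup (Set.range (ecc G))

/-- Diameter of a set of vertices: `max_{u,v ∈ S} d(u,v)`. -/
noncomputable def diamS (G : SimpleGraph V) (S : Set V) : ℕ :=
  sSup {d | ∃ u ∈ S, ∃ v ∈ S, d = G.dist u v}

/-- `C_G^k(M) = {v : ecc^M(v) ≤ rad_G(M) + k}`. -/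
def Ck (G : SimpleGraph V) (M : Set V) (k : ℕ) : Set V :=
  {v | eccM G M v ≤ radM G M + k}

/-- Distance from a vertex to a set: `min_{s ∈ S} d(x,s)`. -/
noncomputable def distToSet (G : SimpleGraph V) (x : V) (S : Set V) : ℕ :=
  sInf ((G.dist x) '' S)

/-- The Helly-gap of `G`: the least `α` such that `G` is `α`-weakly-Helly. -/
noncomputable def hellyGap (G : SimpleGraph V) : ℕ :=
  sInf {α | WeaklyHelly G α}

/-- The k-th power of G: same vertices, adjacent iff 1 ≤ d_G(u,v) ≤ k. -/
def graphPower (G : SimpleGraph V) (k : ℕ) : SimpleGraph V where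
  Adj u v := u ≠ v ∧ G.dist u v ≤ k
  symm := by
    constructor
    intro u v h
    exact ⟨h.1.symm, by rw [SimpleGraph.dist_comm]; exact h.2⟩
  loopless := by constructor; intro v h; exact h.1 rfl

/-!
A walk of length `m` in `G^k` projects to a walk of length at most `k m` in `G`, and conversely
a shortest `G`-path of length at most `m k` cut into `m` pieces of length at most `k` is a walk of
length at most `m` in `G^k`. Hence `d_{G^k}(u,v) ≤ m ↔ d_G(u,v) ≤ m k`. Given pairwise
intersecting disks `D_{G^k}(v, r v)`, the disks `D_G(v, k r v)` pairwise intersect, so some `c`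
lies within `k r v + α ≤ k (r v + ⌈α/k⌉)` of every centre in `G`, i.e. within `r v + ⌈α/k⌉` in
`G^k`.
-/

namespace SimpleGraph

variable {G : SimpleGraph V} {u v : V} {k m : ℕ}

lemma le_graphPower (hk : 1 ≤ k) : G ≤ graphPower G k := fun _ _ huv =>
  ⟨huv.ne, (dist_eq_one_iff_adj.mpr huv).le.trans hk⟩

lemma Connected.connected_graphPower (hc : G.Connected) (hk : 1 ≤ k) :
    (graphPower G k).Connected :=
  hc.mono (le_graphPower hk)

lemma dist_graphPower_le_one (h : G.dist u v ≤ k) : (graphPower G k).dist u v ≤ 1 := by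
  by_cases huv : u = v
  · simp [huv]
  · exact (dist_eq_one_iff_adj.mpr (show (graphPower G k).Adj u v from ⟨huv, h⟩)).le

lemma Connected.dist_le_mul_length_of_walk_graphPower (hc : G.Connected)
    (p : (graphPower G k).Walk u v) : G.dist u v ≤ k * p.length := by
  induction p with
  | nil => simp
  | @cons u w v huw _ ih =>
    calc G.dist u v ≤ G.dist u w + G.dist w v := hc.dist_triangle
      _ ≤ k + k * _ := Nat.add_le_add huw.2 ih
      _ = _ := by rw [Walk.length_cons]; ring

lemma Connected.exists_dist_le_and_dist_le (hc : G.Connected) (h : G.dist u v ≤ m + k) :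
    ∃ w, G.dist u w ≤ m ∧ G.dist w v ≤ k := by
  obtain ⟨p, hp⟩ := hc.exists_walk_length_eq_dist u v
  refine ⟨p.getVert m, (dist_le (p.take m)).trans ?_, (dist_le (p.drop m)).trans ?_⟩
  · rw [Walk.take_length]
    exact min_le_left _ _
  · rw [Walk.drop_length]
    omega

lemma Connected.dist_graphPower_le_of_dist_le_mul (hc : G.Connected) (hk : 1 ≤ k)
    (h : G.dist u v ≤ m * k) : (graphPower G k).dist u v ≤ m := by
  induction m generalizing u with
  | zero => simp [hc.dist_eq_zero_iff.mp (Nat.le_zero.mp (by simpa using h))]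
  | succ m ih =>
    obtain ⟨w, huw, hwv⟩ := hc.exists_dist_le_and_dist_le (m := k) (k := m * k) (by linarith)
    calc (graphPower G k).dist u v
        ≤ (graphPower G k).dist u w + (graphPower G k).dist w v :=
          (hc.connected_graphPower hk).dist_triangle
      _ ≤ 1 + m := Nat.add_le_add (dist_graphPower_le_one huw) (ih hwv)
      _ = m + 1 := Nat.add_comm 1 m

lemma Connected.dist_graphPower_le_iff (hc : G.Connected) (hk : 1 ≤ k) :
    (graphPower G k).dist u v ≤ m ↔ G.dist u v ≤ m * k := by
  refine ⟨fun h => ?_, hc.dist_graphPower_le_of_dist_le_mul hk⟩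
  obtain ⟨p, hp⟩ := (hc.connected_graphPower hk).exists_walk_length_eq_dist u v
  calc G.dist u v ≤ k * p.length := hc.dist_le_mul_length_of_walk_graphPower p
    _ ≤ m * k := by rw [hp, mul_comm]; exact Nat.mul_le_mul_right k h

end SimpleGraph

theorem weaklyHelly_power_general (G : SimpleGraph V) (hc : G.Connected)
    (α k : ℕ) (hk : 1 ≤ k) (h : WeaklyHelly G α) :
    WeaklyHelly (graphPower G k) ((α + k - 1) / k) := by
  intro S r hS
  obtain ⟨c, hc_mem⟩ := h S (fun v => k * r v) fun x hx y hy => by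
    simpa [add_mul, mul_comm, mul_add] using (hc.dist_graphPower_le_iff hk).mp (hS x hx y hy)
  refine ⟨c, fun v hv => (hc.dist_graphPower_le_iff hk).mpr ?_⟩
  have hα : α ≤ k • (α ⌈/⌉ k) := le_smul_ceilDiv hk
  rw [smul_eq_mul] at hα
  rw [Nat.ceilDiv_eq_add_pred_div] at hα
  calc G.dist v c ≤ k * r v + α := hc_mem v hv
    _ ≤ (r v + (α + k - 1) / k) * k := by linarith

/-- If G is α-weakly-Helly then its k-th power (k ≥ 1) is ⌈α/k⌉-weakly-Helly,
where ⌈α/k⌉ = (α + k - 1) / k in natural-number arithmetic. -/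
theorem weaklyHelly_power [Fintype V] (G : SimpleGraph V) (hc : G.Connected)
    (α k : ℕ) (hk : 1 ≤ k) (h : WeaklyHelly G α) :
    WeaklyHelly (graphPower G k) ((α + k - 1) / k) :=
  weaklyHelly_power_general G hc α k hk h
end

section
/- If G is an α-weakly-Helly graph then diam(G) ≥ 2·rad(G) − 2α − 1. -/
open SimpleGraph

variable {V : Type*}

/-! Any two vertices are at distance at most `diam ≤ 2⌈diam/2⌉`, so the disks of radius
`⌈diam/2⌉` around all vertices pairwise intersect; a common point of the disks enlarged by `α`
is a vertex of eccentricity at most `⌈diam/2⌉ + α`. -/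

theorem dist_le_ecc [Finite V] (G : SimpleGraph V) (u v : V) : G.dist u v ≤ ecc G u :=
  le_csSup (Set.finite_range _).bddAbove ⟨v, rfl⟩

theorem ecc_le_gdiam [Finite V] (G : SimpleGraph V) (v : V) : ecc G v ≤ gdiam G :=
  le_csSup (Set.finite_range _).bddAbove ⟨v, rfl⟩

theorem dist_le_gdiam [Finite V] (G : SimpleGraph V) (u v : V) : G.dist u v ≤ gdiam G :=
  (dist_le_ecc G u v).trans (ecc_le_gdiam G u)

theorem grad_le_ecc (G : SimpleGraph V) (v : V) : grad G ≤ ecc G v :=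
  Nat.sInf_le ⟨v, rfl⟩

theorem ecc_le_of_forall_dist_le {G : SimpleGraph V} {u : V} {k : ℕ}
    (h : ∀ v, G.dist u v ≤ k) : ecc G u ≤ k :=
  csSup_le' <| Set.forall_mem_range.2 h

theorem WeaklyHelly.exists_ecc_le {G : SimpleGraph V} {α r : ℕ} (h : WeaklyHelly G α)
    (hr : ∀ u v, G.dist u v ≤ 2 * r) : ∃ c, ecc G c ≤ r + α := by
  obtain ⟨c, hc⟩ := h Set.univ (fun _ => r) fun x _ y _ => (hr x y).trans_eq (two_mul r)
  exact ⟨c, ecc_le_of_forall_dist_le fun v => G.dist_comm ▸ hc v (Set.mem_univ v)⟩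

theorem diam_ge_of_weaklyHelly_general [Fintype V] (G : SimpleGraph V)
    (α : ℕ) (h : WeaklyHelly G α) :
    2 * grad G ≤ gdiam G + 2 * α + 1 := by
  obtain ⟨c, hc⟩ := h.exists_ecc_le (r := (gdiam G + 1) / 2) fun u v =>
    (dist_le_gdiam G u v).trans (by omega)
  have := grad_le_ecc G c
  omega

/-- If G is α-weakly-Helly then diam(G) ≥ 2 rad(G) - 2α - 1. -/
theorem diam_ge_of_weaklyHelly [Fintype V] (G : SimpleGraph V) (hc : G.Connected)
    (α : ℕ) (h : WeaklyHelly G α) :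
    2 * grad G ≤ gdiam G + 2 * α + 1 :=
  diam_ge_of_weaklyHelly_general G α h
end

section
/- Let G be an α-weakly-Helly graph, M ⊆ V(G), and v a vertex with e_G^M(v) > rad_G(M) + α. Then there exists a vertex u with d_G(v,u) ≤ 2α+1 and e_G^M(u) < e_G^M(v). -/
/-!
Let `e = ecc^M(v)` and let `c₀` be a center of `M`. The disk of radius `α + 1` around `v` and the
disks of radius `e - α - 1 ≥ rad(M)` around the points of `M` pairwise intersect (the latter all
contain `c₀`), so `α`-weak Hellyness yields a vertex `c` within `2α + 1` of `v` and within `e - 1`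
of every point of `M` other than `v`. Since a vertex carries only one disk, `v ∈ M` with
`e ≤ 2α + 1` escapes this bound; in that case `c₀` itself works.
-/

open SimpleGraph

variable {V : Type*}

variable {G : SimpleGraph V} {M : Set V}

lemma eccM_le_iff (hM : M.Finite) {w : V} {k : ℕ} :
    eccM G M w ≤ k ↔ ∀ m ∈ M, G.dist w m ≤ k := by
  rcases M.eq_empty_or_nonempty with rfl | hne
  · simp [eccM]
  · rw [eccM, csSup_le_iff (hM.image _).bddAbove (hne.image _), Set.forall_mem_image]

lemma dist_le_eccM (hM : M.Finite) (w : V) {m : V} (hm : m ∈ M) : G.dist w m ≤ eccM G M w :=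
  (eccM_le_iff hM).1 le_rfl m hm

lemma exists_eccM_eq_radM [Nonempty V] (G : SimpleGraph V) (M : Set V) :
    ∃ c, eccM G M c = radM G M :=
  Nat.sInf_mem (Set.range_nonempty _)

lemma WeaklyHelly.exists_near_point_and_set {α p q : ℕ} (h : WeaklyHelly G α) (hc : G.Connected)
    {v c₀ : V} (hv : ∀ m ∈ M, G.dist v m ≤ p + q) (hc₀ : ∀ m ∈ M, G.dist m c₀ ≤ q) :
    ∃ c, G.dist v c ≤ p + α ∧ ∀ m ∈ M, m ≠ v → G.dist m c ≤ q + α := by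
  classical
  let r : V → ℕ := fun x => if x = v then p else q
  have hvS : ∀ y ∈ insert v M, G.dist v y ≤ r v + r y := by
    rintro y (rfl | hy)
    · simp
    · by_cases hyv : y = v
      · simp [hyv]
      · simpa [r, hyv] using hv y hy
  have hpair : ∀ x ∈ insert v M, ∀ y ∈ insert v M, G.dist x y ≤ r x + r y := by
    intro x hx y hy
    by_cases hxv : x = v
    · subst hxv; exact hvS y hy
    by_cases hyv : y = v
    · subst hyv; rw [G.dist_comm, add_comm]; exact hvS x hx
    have hxM : x ∈ M := hx.resolve_left hxv
    have hyM : y ∈ M := hy.resolve_left hyv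
    calc G.dist x y ≤ G.dist x c₀ + G.dist c₀ y := hc.dist_triangle
      _ ≤ q + q := add_le_add (hc₀ x hxM) (G.dist_comm ▸ hc₀ y hyM)
      _ = r x + r y := by simp [r, hxv, hyv]
  obtain ⟨c, hc⟩ := h (insert v M) r hpair
  refine ⟨c, by simpa [r] using hc v (Set.mem_insert v M), fun m hm hmv => ?_⟩
  simpa [r, hmv] using hc m (Set.mem_insert_of_mem v hm)

/-- In an α-weakly-Helly graph, any vertex v with ecc^M(v) > rad_G(M) + α has a
vertex of strictly smaller M-eccentricity within distance 2α + 1. -/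
theorem exists_smaller_ecc_nearby [Fintype V] (G : SimpleGraph V) (hc : G.Connected)
    (α : ℕ) (h : WeaklyHelly G α) (M : Set V) (v : V)
    (hv : radM G M + α < eccM G M v) :
    ∃ u : V, G.dist v u ≤ 2 * α + 1 ∧ eccM G M u < eccM G M v := by
  have : Nonempty V := ⟨v⟩
  set e := eccM G M v
  obtain ⟨c₀, hc₀⟩ := exists_eccM_eq_radM G M
  have hc₀M : ∀ m ∈ M, G.dist m c₀ ≤ e - α - 1 := fun m hm => by
    have : G.dist c₀ m ≤ radM G M := hc₀ ▸ dist_le_eccM M.toFinite c₀ hm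
    rw [G.dist_comm]; omega
  by_cases hsmall : v ∈ M ∧ e ≤ 2 * α + 1
  · exact ⟨c₀, by have := hc₀M v hsmall.1; omega, by omega⟩
  have hvM : ∀ m ∈ M, G.dist v m ≤ (α + 1) + (e - α - 1) := fun m hm => by
    have : G.dist v m ≤ e := dist_le_eccM M.toFinite v hm
    omega
  obtain ⟨c, hvc, hMc⟩ := h.exists_near_point_and_set hc hvM hc₀M
  refine ⟨c, by omega, Nat.lt_of_le_sub_one (by omega) ((eccM_le_iff M.toFinite).2 ?_)⟩
  intro m hm
  rw [G.dist_comm]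
  by_cases hmv : m = v
  · subst hmv
    have : ¬e ≤ 2 * α + 1 := fun hle => hsmall ⟨hm, hle⟩
    omega
  · have := hMc m hm hmv; omega
end

section
/- Let G be an α-weakly-Helly graph and M ⊆ V(G). Then every vertex x satisfies e_G^M(x) ≥ d_G(x, C_G^α(M)) + rad_G(M) − α, where C_G^α(M) = {v : e_G^M(v) ≤ rad_G(M) + α}. -/
open SimpleGraph

variable {V : Type*}

/-!
Apply the `α`-weakly-Helly property to the disks of radius `rad(M)` around the vertices of `M`
together with the disk of radius `e(x) - rad(M)` around `x`. These pairwise intersect: two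
vertices of `M` are within `2 rad(M)` of each other through a vertex of minimal `M`-eccentricity,
and `x` is within `e(x)` of every vertex of `M`. A common point of the enlarged disks lies in
`C^α(M)` at distance at most `e(x) - rad(M) + α` from `x`.
-/

namespace SimpleGraph

variable {G : SimpleGraph V} {M : Set V}

theorem dist_le_eccM (hM : M.Finite) (v : V) {u : V} (hu : u ∈ M) : G.dist v u ≤ eccM G M v :=
  le_csSup (hM.image _).bddAbove ⟨u, hu, rfl⟩

theorem eccM_le {v : V} {n : ℕ} (h : ∀ u ∈ M, G.dist v u ≤ n) : eccM G M v ≤ n :=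
  csSup_le' (by rintro _ ⟨u, hu, rfl⟩; exact h u hu)

theorem radM_le_eccM (v : V) : radM G M ≤ eccM G M v :=
  Nat.sInf_le ⟨v, rfl⟩

theorem exists_eccM_eq_radM [Nonempty V] : ∃ c, eccM G M c = radM G M :=
  Nat.sInf_mem (Set.range_nonempty _)

theorem distToSet_le {S : Set V} (x : V) {v : V} (hv : v ∈ S) : distToSet G x S ≤ G.dist x v :=
  Nat.sInf_le ⟨v, hv, rfl⟩

theorem Connected.dist_le_radM_add_radM (hc : G.Connected) (hM : M.Finite) {u v : V}
    (hu : u ∈ M) (hv : v ∈ M) : G.dist u v ≤ radM G M + radM G M := by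
  have : Nonempty V := ⟨u⟩
  obtain ⟨c, hcenter⟩ := exists_eccM_eq_radM (G := G) (M := M)
  calc G.dist u v ≤ G.dist c u + G.dist c v := by
        rw [G.dist_comm (u := c)]; exact hc.dist_triangle
    _ ≤ radM G M + radM G M := by
        rw [← hcenter]; exact add_le_add (dist_le_eccM hM c hu) (dist_le_eccM hM c hv)

theorem Connected.eccM_le_radM_add_radM (hc : G.Connected) (hM : M.Finite) {x : V}
    (hx : x ∈ M) : eccM G M x ≤ radM G M + radM G M :=
  eccM_le fun _ hu ↦ hc.dist_le_radM_add_radM hM hx hu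

theorem WeaklyHelly.exists_mem_Ck_dist_le {α : ℕ} (h : WeaklyHelly G α) (hc : G.Connected)
    (hM : M.Finite) (x : V) :
    ∃ c ∈ Ck G M α, G.dist x c ≤ eccM G M x - radM G M + α := by
  classical
  set e := eccM G M x
  set r := radM G M
  have hre : r ≤ e := radM_le_eccM x
  let radius : V → ℕ := fun v ↦ if v = x then e - r else r
  have hx_radius : radius x = e - r := if_pos rfl
  have hM_radius : ∀ u ∈ M, radius u ≤ r := by
    intro u hu
    by_cases hux : u = x
    · have := hc.eccM_le_radM_add_radM hM (hux ▸ hu)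
      simp only [radius, if_pos hux]; omega
    · simp only [radius, if_neg hux, le_refl]
  have hx_to_M : ∀ u ∈ insert x M, G.dist x u ≤ radius x + radius u := by
    rintro u (rfl | hu)
    · simp
    · by_cases hux : u = x
      · simp [hux]
      · have := dist_le_eccM (G := G) hM x hu
        simp only [radius, if_pos, if_neg hux]; omega
  have hpairwise : ∀ a ∈ insert x M, ∀ b ∈ insert x M, G.dist a b ≤ radius a + radius b := by
    intro a ha b hb
    by_cases hax : a = x
    · exact hax ▸ hx_to_M b hb
    by_cases hbx : b = x
    · rw [hbx, G.dist_comm, add_comm]; exact hx_to_M a ha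
    simp only [radius, if_neg hax, if_neg hbx]
    exact hc.dist_le_radM_add_radM hM (ha.resolve_left hax) (hb.resolve_left hbx)
  obtain ⟨c, hcover⟩ := h (insert x M) radius hpairwise
  refine ⟨c, eccM_le fun u hu ↦ ?_, hx_radius ▸ hcover x (Set.mem_insert x M)⟩
  rw [G.dist_comm]
  exact (hcover u (Or.inr hu)).trans (by have := hM_radius u hu; omega)

end SimpleGraph

/-- In an α-weakly-Helly graph, ecc^M(x) ≥ d(x, C_G^α(M)) + rad_G(M) - α. -/
theorem ecc_lower_bound [Fintype V] (G : SimpleGraph V) (hc : G.Connected)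
    (α : ℕ) (h : WeaklyHelly G α) (M : Set V) (x : V) :
    distToSet G x (Ck G M α) + radM G M ≤ eccM G M x + α := by
  obtain ⟨c, hcC, hxc⟩ := h.exists_mem_Ck_dist_le hc M.toFinite x
  have := distToSet_le (G := G) x hcC
  have := radM_le_eccM (G := G) (M := M) x
  omega
end

section
/- Every cycle C_n (n ≥ 3) has Helly-gap exactly ⌊n/4⌋: C_n is ⌊n/4⌋-weakly-Helly but not (⌊n/4⌋−1)-weakly-Helly (when ⌊n/4⌋ ≥ 1). -/
open SimpleGraph

variable {V : Type*}

/-- The cycle graph on ZMod n: u ~ v iff they differ by ±1. -/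
def cycleG (n : ℕ) : SimpleGraph (ZMod n) where
  Adj u v := u ≠ v ∧ (u - v = 1 ∨ v - u = 1)
  symm := by
    constructor
    intro u v h
    exact ⟨h.1.symm, h.2.symm⟩
  loopless := by
    constructor
    intro v h
    exact h.1 rfl

/-! The distance in `C_n` from `x` to `y` is `|y - x|`, computed with the representative of
`y - x ∈ ZMod n` of least absolute value. So the diameter is `⌊n/2⌋` and every vertex has an
antipode at that distance, and the general bounds `⌊diam/2⌋` (center a small disk, or anywhere
if all disks are large) and `⌊(2 rad - diam)/2⌋` (disks of radius `⌈diam/2⌉` around all vertices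
pairwise meet) both equal `⌊n/4⌋`. -/

section WeaklyHelly

variable {G : SimpleGraph V} {α D : ℕ}

theorem weaklyHelly_half_of_dist_le [Nonempty V] (hD : ∀ x y, G.dist x y ≤ D) :
    WeaklyHelly G (D / 2) := by
  intro S r hr
  by_cases hsmall : ∃ u ∈ S, r u ≤ D / 2
  · obtain ⟨u, hu, hru⟩ := hsmall
    exact ⟨u, fun v hv => (hr v hv u hu).trans (by omega)⟩
  · push Not at hsmall
    obtain ⟨c⟩ := ‹Nonempty V›
    exact ⟨c, fun v hv => (hD v c).trans (by have := hsmall v hv; omega)⟩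

theorem WeaklyHelly.le_half_add_of_dist_le {R : ℕ} (h : WeaklyHelly G α)
    (hD : ∀ x y, G.dist x y ≤ D) (hR : ∀ c, ∃ v, R ≤ G.dist v c) : R ≤ (D + 1) / 2 + α := by
  obtain ⟨c, hc⟩ := h Set.univ (fun _ => (D + 1) / 2)
    (fun x _ y _ => (hD x y).trans (by omega))
  obtain ⟨v, hv⟩ := hR c
  exact hv.trans (hc v trivial)

end WeaklyHelly

namespace ZMod

variable {n : ℕ}

theorem natAbs_valMinAbs_one_le : (1 : ZMod n).valMinAbs.natAbs ≤ 1 := by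
  rcases n with _ | _ | n
  · simp
  · simp [Subsingleton.elim (1 : ZMod 1) 0]
  · rw [← Nat.cast_one (R := ZMod (n + 2)), valMinAbs_natCast_of_le_half (by omega)]
    simp

end ZMod

section CycleDist

variable {n : ℕ}

theorem cycleG_adj_add_one [Fact (1 < n)] (x : ZMod n) : (cycleG n).Adj x (x + 1) :=
  ⟨by simp, Or.inr (by ring)⟩

theorem cycleG_exists_walk_add_natCast [Fact (1 < n)] (x : ZMod n) (k : ℕ) :
    ∃ w : (cycleG n).Walk x (x + k), w.length = k := by
  induction k with
  | zero => exact ⟨Walk.nil.copy rfl (by simp), by simp⟩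
  | succ k ih =>
    obtain ⟨w, hw⟩ := ih
    exact ⟨(w.concat (cycleG_adj_add_one _)).copy rfl (by push_cast; ring), by simp [hw]⟩

theorem cycleG_exists_walk [Fact (1 < n)] (x y : ZMod n) :
    ∃ w : (cycleG n).Walk x y, w.length = (y - x).valMinAbs.natAbs := by
  have hcast := ZMod.natCast_natAbs_valMinAbs (y - x)
  split_ifs at hcast
  · obtain ⟨w, hw⟩ := cycleG_exists_walk_add_natCast x (y - x).valMinAbs.natAbs
    exact ⟨w.copy rfl (by rw [hcast]; ring), by simpa using hw⟩
  · obtain ⟨w, hw⟩ := cycleG_exists_walk_add_natCast y (y - x).valMinAbs.natAbs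
    exact ⟨(w.copy rfl (by rw [hcast]; ring)).reverse, by simpa using hw⟩

theorem cycleG_natAbs_valMinAbs_sub_le_length {x y : ZMod n} (w : (cycleG n).Walk x y) :
    (y - x).valMinAbs.natAbs ≤ w.length := by
  induction w with
  | nil => simp
  | @cons a b c hadj w ih =>
    have hstep : (b - a).valMinAbs.natAbs ≤ 1 := by
      rcases hadj.2 with h | h
      · rw [← neg_sub, h, ZMod.natAbs_valMinAbs_neg]
        exact ZMod.natAbs_valMinAbs_one_le
      · rw [h]
        exact ZMod.natAbs_valMinAbs_one_le
    calc (c - a).valMinAbs.natAbs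
        ≤ ((c - b).valMinAbs + (b - a).valMinAbs).natAbs := by
          simpa using ZMod.natAbs_valMinAbs_add_le (c - b) (b - a)
      _ ≤ (c - b).valMinAbs.natAbs + (b - a).valMinAbs.natAbs := Int.natAbs_add_le _ _
      _ ≤ (w.cons hadj).length := by simp only [Walk.length_cons]; omega

theorem cycleG_dist [Fact (1 < n)] (x y : ZMod n) :
    (cycleG n).dist x y = (y - x).valMinAbs.natAbs := by
  obtain ⟨w, hw⟩ := cycleG_exists_walk x y
  obtain ⟨w', hw'⟩ := Reachable.exists_walk_length_eq_dist ⟨w⟩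
  exact le_antisymm (hw ▸ dist_le w) (hw' ▸ cycleG_natAbs_valMinAbs_sub_le_length w')

end CycleDist

/-- The cycle C_n (n ≥ 3) has Helly-gap exactly ⌊n/4⌋: it is ⌊n/4⌋-weakly-Helly,
and (when ⌊n/4⌋ ≥ 1) it is not (⌊n/4⌋ - 1)-weakly-Helly. -/
theorem hellyGap_cycle (n : ℕ) (hn : 3 ≤ n) :
    WeaklyHelly (cycleG n) (n / 4) ∧
      (1 ≤ n / 4 → ¬ WeaklyHelly (cycleG n) (n / 4 - 1)) := by
  have : Fact (1 < n) := ⟨by omega⟩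
  have hdiam (x y : ZMod n) : (cycleG n).dist x y ≤ n / 2 :=
    cycleG_dist x y ▸ ZMod.natAbs_valMinAbs_le _
  have hantipode (c : ZMod n) : n / 2 ≤ (cycleG n).dist c (c + (n / 2 : ℕ)) := by
    rw [cycleG_dist, add_sub_cancel_left, ZMod.valMinAbs_natCast_of_le_half le_rfl,
      Int.natAbs_natCast]
  refine ⟨?_, fun hquarter hHelly => ?_⟩
  · simpa [Nat.div_div_eq_div_mul] using weaklyHelly_half_of_dist_le hdiam
  · have := hHelly.le_half_add_of_dist_le hdiam
      fun c => ⟨c + (n / 2 : ℕ), dist_comm (G := cycleG n) ▸ hantipode c⟩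
    omega
end

section
/- If a graph G satisfies the α_i-metric property, then G is ⌈i/2⌉-weakly-Helly: any family of pairwise intersecting disks in G has a nonempty common intersection when each radius is increased by ⌈i/2⌉. -/
open SimpleGraph

variable {V : Type*}

/-!
If every disk `D(v, r v + k)`, `v ∈ S`, contains `c`, call `v` tight at `c` when `c` lies on the
boundary of its disk. Take a tight `x` and move `c` one step towards `x` to `c'`. If this pushed
some `y ∈ S` out of its disk, then `c` would lie on a geodesic from `c'` to `y` and `c'` on one
from `x` to `c`, so the `α_i`-metric and `d(x,y) ≤ r x + r y` would give `2k ≤ i + 1`. Hence as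
long as `2k ≥ i + 2`, `c'` is again a common point, with strictly fewer tight vertices (`x` is no
longer tight); iterating removes all tight vertices and lowers `k` by one, down to `⌈i/2⌉`.
-/

namespace SimpleGraph

lemma exists_adj_dist_add_one_eq {G : SimpleGraph V} {u v : V} (h : G.dist u v ≠ 0) :
    ∃ w, G.Adj u w ∧ G.dist w v + 1 = G.dist u v := by
  obtain ⟨p, hp⟩ := exists_walk_of_dist_ne_zero h
  cases p with
  | nil => simp at h
  | cons hadj q =>
    refine ⟨_, hadj, le_antisymm ?_ ?_⟩
    · simpa [← hp] using dist_le q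
    · simpa [dist_eq_one_iff_adj.mpr hadj, add_comm] using
        hadj.reachable.dist_triangle_left v

/-- `z ∈ I(x,y)` and `y ∈ I(z,v)` are written as equalities of distances. -/
def HasAlphaMetric (G : SimpleGraph V) (i : ℕ) : Prop :=
  ∀ x y z v : V, G.dist x z + G.dist z y = G.dist x y →
    G.dist z y + G.dist y v = G.dist z v →
    G.dist x y + G.dist y v ≤ G.dist x v + i

lemma HasAlphaMetric.dist_add_dist_le_of_adj {G : SimpleGraph V} {i : ℕ}
    (hα : G.HasAlphaMetric i) {x y c c' : V} (hadj : G.Adj c c')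
    (hx : G.dist x c' + 1 = G.dist x c) (hy : G.dist y c' = G.dist y c + 1) :
    G.dist x c + G.dist y c ≤ G.dist x y + i := by
  have hcc' : G.dist c' c = 1 := dist_eq_one_iff_adj.mpr hadj.symm
  have hcy : G.dist c y = G.dist y c := dist_comm
  have hc'y : G.dist c' y = G.dist y c' := dist_comm
  have := hα x c c' y (by omega) (by omega)
  omega

variable (G : SimpleGraph V) (S : Set V) (r : V → ℕ)

def InAllDisks (k : ℕ) (c : V) : Prop :=
  ∀ v ∈ S, G.dist v c ≤ r v + k

def tightSet (k : ℕ) (c : V) : Set V :=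
  {v ∈ S | G.dist v c = r v + k}

variable {G S r}

lemma InAllDisks.mono {k k' : ℕ} {c : V} (hc : G.InAllDisks S r k c) (hkk' : k ≤ k') :
    G.InAllDisks S r k' c :=
  fun v hv => (hc v hv).trans (by omega)

lemma exists_inAllDisks [Nonempty V] (hS : ∀ x ∈ S, ∀ y ∈ S, G.dist x y ≤ r x + r y) :
    ∃ k c, G.InAllDisks S r k c := by
  rcases S.eq_empty_or_nonempty with rfl | ⟨s, hs⟩
  · exact ⟨0, Classical.arbitrary V, by simp [InAllDisks]⟩
  · exact ⟨r s, s, fun v hv => hS v hv s hs⟩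

lemma InAllDisks.exists_tightSet_ssubset (hG : G.Connected) {i k : ℕ} (hα : G.HasAlphaMetric i)
    (hS : ∀ x ∈ S, ∀ y ∈ S, G.dist x y ≤ r x + r y) (hk : i + 2 ≤ 2 * k) {c x : V}
    (hc : G.InAllDisks S r k c) (hx : x ∈ G.tightSet S r k c) :
    ∃ c', G.InAllDisks S r k c' ∧ G.tightSet S r k c' ⊂ G.tightSet S r k c := by
  obtain ⟨hxS, hxc⟩ := hx
  obtain ⟨c', hadj, hc'x⟩ := exists_adj_dist_add_one_eq (G := G) (u := c) (v := x)
    (by rw [dist_comm]; omega)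
  rw [dist_comm, dist_comm (u := c)] at hc'x
  have step : ∀ y ∈ S, G.dist y c' ≤ G.dist y c ∨ G.dist y c' < r y + k := by
    intro y hy
    have htri : G.dist y c' ≤ G.dist y c + G.dist c c' := hG.dist_triangle
    rw [dist_eq_one_iff_adj.mpr hadj] at htri
    by_cases hfar : G.dist y c' = G.dist y c + 1
    · have := hα.dist_add_dist_le_of_adj hadj hc'x hfar
      have := hS x hxS y hy
      omega
    · omega
  refine ⟨c', fun y hy => ?_, fun y ⟨hy, hyc'⟩ => ⟨hy, ?_⟩, fun hsub => ?_⟩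
  · have := hc y hy
    have := step y hy
    omega
  · have := hc y hy
    have := step y hy
    omega
  · have := (hsub ⟨hxS, hxc⟩).2
    omega

lemma exists_inAllDisks_of_succ [Finite V] (hG : G.Connected) {i k : ℕ}
    (hα : G.HasAlphaMetric i) (hS : ∀ x ∈ S, ∀ y ∈ S, G.dist x y ≤ r x + r y)
    (hk : i ≤ 2 * k) (h : ∃ c, G.InAllDisks S r (k + 1) c) :
    ∃ c, G.InAllDisks S r k c := by
  obtain ⟨c, hc, hmin⟩ :=
    (measure fun c => (G.tightSet S r (k + 1) c).ncard).wf.has_min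
      {c | G.InAllDisks S r (k + 1) c} h
  refine ⟨c, fun v hv => ?_⟩
  have hvc := hc v hv
  by_contra hv_tight
  obtain ⟨c', hc', hsub⟩ :=
    hc.exists_tightSet_ssubset hG hα hS (by omega) (x := v) ⟨hv, by omega⟩
  exact hmin c' hc' (Set.ncard_lt_ncard hsub)

lemma exists_inAllDisks_of_le [Finite V] (hG : G.Connected) {i k m : ℕ}
    (hα : G.HasAlphaMetric i) (hS : ∀ x ∈ S, ∀ y ∈ S, G.dist x y ≤ r x + r y)
    (hk : i ≤ 2 * k) (hkm : k ≤ m) (h : ∃ c, G.InAllDisks S r m c) :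
    ∃ c, G.InAllDisks S r k c := by
  induction m, hkm using Nat.le_induction with
  | base => exact h
  | succ m hkm ih => exact ih (exists_inAllDisks_of_succ hG hα hS (by omega) h)

end SimpleGraph

/-- A graph with an α_i-metric is ⌈i/2⌉-weakly-Helly, where ⌈i/2⌉ = (i+1)/2.
The α_i-metric condition: for all x,y,z,v with z ∈ I(x,y) and y ∈ I(z,v),
d(x,v) ≥ d(x,y) + d(y,v) - i. -/
theorem weaklyHelly_of_alpha_i [Fintype V] (G : SimpleGraph V) (hc : G.Connected)
    (i : ℕ)
    (hai : ∀ x y z v : V, G.dist x z + G.dist z y = G.dist x y →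
      G.dist z y + G.dist y v = G.dist z v →
      G.dist x y + G.dist y v ≤ G.dist x v + i) :
    WeaklyHelly G ((i + 1) / 2) := by
  intro S r hS
  have := hc.nonempty
  obtain ⟨m, c, hm⟩ := exists_inAllDisks hS
  exact exists_inAllDisks_of_le hc hai hS (by omega) (le_max_right m _)
    ⟨c, hm.mono (le_max_left m ((i + 1) / 2))⟩
end

section
/- If a graph G admits a tree-decomposition of breadth ρ, then G is ρ-weakly-Helly: any family of pairwise intersecting disks of G has a common intersection when each radius is increased by ρ. -/
open SimpleGraph

variable {V : Type*}

/-!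
For every `v ∈ S` the bags meeting the disk `D(v, r v)` form a subtree of `T`: bags containing a
common vertex or an edge overlap, and the disk is connected along geodesics towards `v`. Two
intersecting disks share a vertex and hence a bag, so these subtrees pairwise intersect, and by the
Helly property of subtrees of a tree some bag meets every disk. The vertex witnessing the breadth
of that bag lies within `r v + ρ` of every `v ∈ S`.
-/

namespace SimpleGraph

variable {ι : Type*} {T : SimpleGraph ι}

/-- In a tree these are exactly the vertex sets of subtrees. -/
def IsPathClosed (T : SimpleGraph ι) (A : Set ι) : Prop :=
  ∀ ⦃a⦄, a ∈ A → ∀ ⦃b⦄, b ∈ A → ∀ p : T.Walk a b, p.IsPath → ∀ x ∈ p.support, x ∈ A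

lemma IsPathClosed.inter {A C : Set ι} (hA : IsPathClosed T A) (hC : IsPathClosed T C) :
    IsPathClosed T (A ∩ C) :=
  fun _ ha _ hb p hp x hx => ⟨hA ha.1 hb.1 p hp x hx, hC ha.2 hb.2 p hp x hx⟩

lemma IsAcyclic.isPathClosed_of_preconnected_induce (hT : T.IsAcyclic) {A : Set ι}
    (hA : (T.induce A).Preconnected) : IsPathClosed T A := by
  classical
  intro a ha b hb p hp x hx
  obtain ⟨q⟩ := hA ⟨a, ha⟩ ⟨b, hb⟩
  have hqA : ∀ y ∈ (q.map (Embedding.induce A).toHom).support, y ∈ A := by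
    simp only [Walk.support_map, List.mem_map]
    rintro _ ⟨y, -, rfl⟩
    exact y.2
  have hpq : p = (q.map (Embedding.induce A).toHom).bypass :=
    congrArg Subtype.val ((hT.subsingleton_path a b).elim ⟨p, hp⟩ ⟨_, Walk.bypass_isPath _⟩)
  exact hqA x (Walk.support_bypass_subset_support _ (hpq ▸ hx))

lemma Walk.exists_eq_append_of_end_mem {u v : ι} (p : T.Walk u v) {s : Set ι} (hv : v ∈ s) :
    ∃ m ∈ s, ∃ (q : T.Walk u m) (r : T.Walk m v),
      (∀ x ∈ q.support, x ∈ s → x = m) ∧ p = q.append r := by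
  induction p with
  | nil => exact ⟨_, hv, nil, nil, by simp, rfl⟩
  | @cons u x w h p ih =>
    by_cases hu : u ∈ s
    · exact ⟨u, hu, nil, cons h p, by simp, rfl⟩
    · obtain ⟨m, hm, q, r, hq, rfl⟩ := ih hv
      refine ⟨m, hm, cons h q, r, ?_, rfl⟩
      rintro y hy hys
      rcases List.mem_cons.mp hy with rfl | hy
      · exact absurd hys hu
      · exact hq y hy hys

lemma Walk.IsPath.append {u v w : ι} {p : T.Walk u v} {q : T.Walk v w} (hp : p.IsPath)
    (hq : q.IsPath) (hpq : ∀ x ∈ p.support, x ∈ q.support → x = v) : (p.append q).IsPath := by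
  have hq' : (v :: q.support.tail).Nodup := q.cons_tail_support ▸ hq.support_nodup
  rw [List.nodup_cons] at hq'
  rw [isPath_def, support_append, List.nodup_append]
  refine ⟨hp.support_nodup, hq'.2, fun x hx y hy hxy => hq'.1 ?_⟩
  subst hxy
  have hxq : x ∈ q.support := q.cons_tail_support ▸ List.mem_cons_of_mem _ hy
  exact hpq x hx hxq ▸ hy

/-- Follow the path from `c ∈ A ∩ B` to `a ∈ B ∩ C` until it first meets the path from `a` to
`b ∈ A ∩ C`: the path from `c` to `b` passes through that vertex too. -/
theorem Preconnected.inter_inter_nonempty_of_isPathClosed (hT : T.Preconnected)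
    {A B C : Set ι} (hA : IsPathClosed T A) (hB : IsPathClosed T B) (hC : IsPathClosed T C)
    (hAB : (A ∩ B).Nonempty) (hAC : (A ∩ C).Nonempty) (hBC : (B ∩ C).Nonempty) :
    (A ∩ B ∩ C).Nonempty := by
  classical
  obtain ⟨a, haB, haC⟩ := hBC
  obtain ⟨b, hbA, hbC⟩ := hAC
  obtain ⟨c, hcA, hcB⟩ := hAB
  obtain ⟨P, hP⟩ := hT.exists_isPath a b
  obtain ⟨Q, hQ⟩ := hT.exists_isPath c a
  obtain ⟨m, hmP, q, r, hqP, rfl⟩ :=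
    Q.exists_eq_append_of_end_mem (s := {x | x ∈ P.support}) P.start_mem_support
  have hcb : (q.append (P.dropUntil m hmP)).IsPath :=
    hQ.of_append_left.append (hP.dropUntil hmP)
      fun x hx hx' => hqP x hx (P.support_dropUntil_subset_support hmP hx')
  refine ⟨m, ⟨?_, ?_⟩, hC haC hbC P hP m hmP⟩
  · exact hA hcA hbA _ hcb m (Walk.support_subset_support_append_left _ _ q.end_mem_support)
  · exact hB hcB haB _ hQ m (Walk.support_subset_support_append_left _ _ q.end_mem_support)

theorem Preconnected.exists_mem_forall_mem_of_isPathClosed (hT : T.Preconnected) {β : Type*}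
    {S : Set β} (hS : S.Finite) {A : β → Set ι} (hA : ∀ s ∈ S, IsPathClosed T (A s))
    (hAA : ∀ s ∈ S, ∀ t ∈ S, (A s ∩ A t).Nonempty) {C : Set ι} (hC : IsPathClosed T C)
    (hCne : C.Nonempty) (hCA : ∀ s ∈ S, (C ∩ A s).Nonempty) :
    ∃ m ∈ C, ∀ s ∈ S, m ∈ A s := by
  induction S, hS using Set.Finite.induction_on generalizing C with
  | empty => exact ⟨hCne.some, hCne.some_mem, by simp⟩
  | @insert a S _ _ ih =>
    simp only [Set.mem_insert_iff, forall_eq_or_imp] at hA hAA hCA ⊢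
    obtain ⟨m, ⟨hmC, hma⟩, hmS⟩ := ih hA.2 (fun s hs => (hAA.2 s hs).2) (hC.inter hA.1) hCA.1
      fun s hs => hT.inter_inter_nonempty_of_isPathClosed hC hA.1 (hA.2 s hs) hCA.1 (hCA.2 s hs)
        (hAA.1.2 s hs)
    exact ⟨m, hmC, hma, hmS⟩

theorem Preconnected.exists_forall_mem_of_isPathClosed [Nonempty ι] (hT : T.Preconnected)
    {β : Type*} {S : Set β} (hS : S.Finite) {A : β → Set ι}
    (hA : ∀ s ∈ S, IsPathClosed T (A s)) (hAA : ∀ s ∈ S, ∀ t ∈ S, (A s ∩ A t).Nonempty) :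
    ∃ m, ∀ s ∈ S, m ∈ A s := by
  obtain ⟨m, -, hm⟩ := hT.exists_mem_forall_mem_of_isPathClosed hS hA hAA
    (fun _ _ _ _ _ _ _ _ => Set.mem_univ _) Set.univ_nonempty
    fun s hs => by simpa using hAA s hs s hs
  exact ⟨m, hm⟩

variable {G : SimpleGraph V} {B : ι → Set V}

lemma Reachable.exists_dist_le_of_dist_le_add {u v : V} (huv : G.Reachable u v) {a b : ℕ}
    (h : G.dist u v ≤ a + b) : ∃ w, G.dist u w ≤ a ∧ G.dist w v ≤ b := by
  obtain ⟨p, hp⟩ := huv.exists_walk_length_eq_dist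
  refine ⟨p.getVert a, (dist_le (p.take a)).trans ?_, (dist_le (p.drop a)).trans ?_⟩
  · simp
  · simp only [Walk.drop_length]
    omega

theorem Walk.connected_induce_bags_meeting_support
    (hedge : ∀ u v : V, G.Adj u v → ∃ i, u ∈ B i ∧ v ∈ B i)
    (hsub : ∀ v : V, (T.induce {i | v ∈ B i}).Connected) {u v : V} (q : G.Walk u v) :
    (T.induce {i | ∃ z ∈ q.support, z ∈ B i}).Connected := by
  induction q with
  | @nil u =>
    have hbags : {i | ∃ z ∈ (nil : G.Walk u u).support, z ∈ B i} = {i | u ∈ B i} := by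
      ext
      simp
    exact hbags ▸ hsub u
  | @cons u x v h q ih =>
    obtain ⟨k, hku, hkx⟩ := hedge u x h
    have hbags : {i | ∃ z ∈ (cons h q).support, z ∈ B i} =
        {i | u ∈ B i} ∪ {i | ∃ z ∈ q.support, z ∈ B i} := by
      ext
      simp
    rw [hbags]
    exact induce_union_connected (hsub u).preconnected ih.preconnected
      ⟨k, hku, x, q.start_mem_support, hkx⟩

/-- A bag meeting the disk in `w` is joined to a bag of `v` through the bags meeting a geodesic
from `w` to `v`, and that geodesic stays inside the disk. -/
theorem Connected.connected_induce_bags_meeting_disk (hc : G.Connected)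
    (hedge : ∀ u v : V, G.Adj u v → ∃ i, u ∈ B i ∧ v ∈ B i)
    (hsub : ∀ v : V, (T.induce {i | v ∈ B i}).Connected) {v : V} {j : ι} (hj : v ∈ B j)
    (r : ℕ) : (T.induce {i | ∃ w ∈ B i, G.dist v w ≤ r}).Connected := by
  classical
  refine induce_connected_of_patches j ⟨v, hj, by simp⟩ ?_
  rintro i ⟨w, hwi, hw⟩
  obtain ⟨q, hq⟩ := hc.exists_walk_length_eq_dist w v
  refine ⟨{i | ∃ z ∈ q.support, z ∈ B i}, ?_, ⟨v, q.end_mem_support, hj⟩,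
    ⟨w, q.start_mem_support, hwi⟩,
    (q.connected_induce_bags_meeting_support hedge hsub).preconnected _ _⟩
  rintro k ⟨z, hz, hzk⟩
  refine ⟨z, hzk, ?_⟩
  calc G.dist v z = G.dist z v := dist_comm
    _ ≤ (q.dropUntil z hz).length := dist_le _
    _ ≤ q.length := q.length_dropUntil_le_length hz
    _ = G.dist v w := hq.trans dist_comm
    _ ≤ r := hw

end SimpleGraph

/-- If G admits a tree-decomposition of breadth ρ, then G is ρ-weakly-Helly. -/
theorem weaklyHelly_of_treeBreadth [Fintype V] {ι : Type*} (G : SimpleGraph V)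
    (hc : G.Connected) (T : SimpleGraph ι) (hT : T.IsTree) (B : ι → Set V)
    (hvert : ∀ v : V, ∃ i, v ∈ B i)
    (hedge : ∀ u v : V, G.Adj u v → ∃ i, u ∈ B i ∧ v ∈ B i)
    (hsub : ∀ v : V, (SimpleGraph.induce {i | v ∈ B i} T).Connected)
    (ρ : ℕ) (hbreadth : ∀ i, ∃ c : V, ∀ u ∈ B i, G.dist c u ≤ ρ) :
    WeaklyHelly G ρ := by
  intro S r hS
  have : Nonempty ι := hT.connected.nonempty
  let A (v : V) : Set ι := {i | ∃ w ∈ B i, G.dist v w ≤ r v}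
  have hA (v : V) : IsPathClosed T (A v) := by
    obtain ⟨j, hj⟩ := hvert v
    exact hT.isAcyclic.isPathClosed_of_preconnected_induce
      (hc.connected_induce_bags_meeting_disk hedge hsub hj (r v)).preconnected
  have hAA : ∀ u ∈ S, ∀ v ∈ S, (A u ∩ A v).Nonempty := by
    intro u hu v hv
    obtain ⟨w, huw, hwv⟩ := (hc u v).exists_dist_le_of_dist_le_add (hS u hu v hv)
    obtain ⟨i, hi⟩ := hvert w
    exact ⟨i, ⟨w, hi, huw⟩, w, hi, dist_comm.trans_le hwv⟩
  obtain ⟨m, hm⟩ := hT.connected.preconnected.exists_forall_mem_of_isPathClosed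
    (Set.toFinite S) (fun v _ => hA v) hAA
  obtain ⟨c, hcm⟩ := hbreadth m
  refine ⟨c, fun v hv => ?_⟩
  obtain ⟨w, hwm, hvw⟩ := hm v hv
  calc G.dist v c ≤ G.dist v w + G.dist w c := hc.dist_triangle
    _ ≤ r v + ρ := add_le_add hvw (dist_comm.trans_le (hcm w hwm))
end

section
/- Let G be a graph isometrically embedded in a Helly graph H such that every vertex of H is within distance α of some vertex of G. Then G is α-weakly-Helly. -/
/-!
Push the pairwise intersecting disks of `G` forward along the isometry into `H` (where several
centres land on one vertex, keep the smallest radius). In `H` they still pairwise intersect, so the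
Helly property gives a common point `c'`; a vertex `c` of `G` with `φ c` within `α` of `c'` is at
distance at most `r v + α` from every centre `v`.
-/

open SimpleGraph

variable {V : Type*}

section

variable {W : Type*}

noncomputable def imageRadius (φ : V → W) (S : Set V) (r : V → ℕ) (w : W) : ℕ :=
  sInf (r '' {v | v ∈ S ∧ φ v = w})

section imageRadius

variable {φ : V → W} {S : Set V} {r : V → ℕ}

theorem imageRadius_apply_le {v : V} (hv : v ∈ S) : imageRadius φ S r (φ v) ≤ r v :=
  Nat.sInf_le ⟨v, ⟨hv, rfl⟩, rfl⟩

theorem exists_eq_imageRadius {w : W} (hw : w ∈ φ '' S) :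
    ∃ v ∈ S, φ v = w ∧ r v = imageRadius φ S r w := by
  obtain ⟨a, ha, rfl⟩ := hw
  obtain ⟨v, ⟨hv, hφv⟩, hrv⟩ := Nat.sInf_mem (⟨r a, a, ⟨ha, rfl⟩, rfl⟩ :
    (r '' {v | v ∈ S ∧ φ v = φ a}).Nonempty)
  exact ⟨v, hv, hφv, hrv⟩

end imageRadius

theorem WeaklyHelly.exists_near_image {G : SimpleGraph V} {H : SimpleGraph W} {β : ℕ}
    (hH : WeaklyHelly H β) {φ : V → W} (hφ : ∀ x y, H.dist (φ x) (φ y) ≤ G.dist x y)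
    {S : Set V} {r : V → ℕ} (hr : ∀ x ∈ S, ∀ y ∈ S, G.dist x y ≤ r x + r y) :
    ∃ c' : W, ∀ v ∈ S, H.dist (φ v) c' ≤ r v + β := by
  have hr' : ∀ x ∈ φ '' S, ∀ y ∈ φ '' S,
      H.dist x y ≤ imageRadius φ S r x + imageRadius φ S r y := by
    intro x hx y hy
    obtain ⟨a, ha, rfl, hra⟩ := exists_eq_imageRadius (r := r) hx
    obtain ⟨b, hb, rfl, hrb⟩ := exists_eq_imageRadius (r := r) hy
    rw [← hra, ← hrb]
    exact (hφ a b).trans (hr a ha b hb)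
  obtain ⟨c', hc'⟩ := hH _ _ hr'
  exact ⟨c', fun v hv =>
    (hc' _ ⟨v, hv, rfl⟩).trans (Nat.add_le_add_right (imageRadius_apply_le hv) β)⟩

theorem WeaklyHelly.of_isometry_of_forall_dist_le {G : SimpleGraph V} {H : SimpleGraph W}
    {β : ℕ} (hH : WeaklyHelly H β) (hcH : H.Connected) {φ : V → W}
    (hiso : ∀ x y, H.dist (φ x) (φ y) = G.dist x y) {α : ℕ}
    (hcov : ∀ h, ∃ v, H.dist h (φ v) ≤ α) : WeaklyHelly G (β + α) := by
  intro S r hr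
  obtain ⟨c', hc'⟩ := hH.exists_near_image (fun x y => (hiso x y).le) hr
  obtain ⟨c, hc⟩ := hcov c'
  refine ⟨c, fun v hv => ?_⟩
  calc G.dist v c = H.dist (φ v) (φ c) := (hiso v c).symm
    _ ≤ H.dist (φ v) c' + H.dist c' (φ c) := hcH.dist_triangle
    _ ≤ r v + (β + α) := by have := hc' v hv; omega

end

theorem weaklyHelly_of_close_embedding_general {W : Type*}
    (G : SimpleGraph V) (H : SimpleGraph W) (hcH : H.Connected)
    (hH : WeaklyHelly H 0) (φ : V → W)
    (hiso : ∀ x y : V, H.dist (φ x) (φ y) = G.dist x y)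
    (α : ℕ) (hcov : ∀ h : W, ∃ v : V, H.dist h (φ v) ≤ α) :
    WeaklyHelly G α := by
  simpa using hH.of_isometry_of_forall_dist_le hcH hiso hcov

/-- If G embeds isometrically (via φ) into a Helly graph H such that every vertex
of H is within distance α of the image of G, then G is α-weakly-Helly. -/
theorem weaklyHelly_of_close_embedding [Fintype V] {W : Type*} [Fintype W]
    (G : SimpleGraph V) (H : SimpleGraph W) (hcG : G.Connected) (hcH : H.Connected)
    (hH : WeaklyHelly H 0) (φ : V → W)
    (hiso : ∀ x y : V, H.dist (φ x) (φ y) = G.dist x y)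
    (α : ℕ) (hcov : ∀ h : W, ∃ v : V, H.dist h (φ v) ≤ α) :
    WeaklyHelly G α :=
  weaklyHelly_of_close_embedding_general G H hcH hH φ hiso α hcov
end

section
/- Let H be a Helly graph, G an isometric subgraph of H, and suppose G is α-weakly-Helly. Further suppose every vertex h of H satisfies: for all x,y ∈ V(G), d_H(h,x)+d_H(h,y) ≥ d_G(x,y), and for all x ∈ V(G) there exists y ∈ V(G) with d_H(h,x)+d_H(h,y) = d_G(x,y). Then every such vertex h is within distance α of some vertex of G. -/
open SimpleGraph

variable {V : Type*}

/-! The distance vector `r` of `h` to `G` describes pairwise intersecting disks `D(x, r x)`, so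
weak Hellyness gives a vertex `c` with `d(v, c) ≤ r v + α` for all `v`. Taking `v` to be the
vertex with `r c + r v = d(c, v)` yields `r c ≤ α`. -/

theorem WeaklyHelly.exists_le_of_tight {G : SimpleGraph V} {α : ℕ} (hG : WeaklyHelly G α)
    (r : V → ℕ) (hr : ∀ x y, G.dist x y ≤ r x + r y)
    (htight : ∀ x, ∃ y, r x + r y = G.dist x y) :
    ∃ v, r v ≤ α := by
  obtain ⟨c, hc⟩ := hG Set.univ r fun x _ y _ => hr x y
  obtain ⟨y, hy⟩ := htight c
  have hyc : G.dist c y ≤ r y + α := G.dist_comm ▸ hc y (Set.mem_univ y)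
  exact ⟨c, by omega⟩

theorem close_real_vertex_of_weaklyHelly_general {W : Type*}
    (G : SimpleGraph V) (H : SimpleGraph W) (φ : V → W)
    (α : ℕ) (hG : WeaklyHelly G α) (h : W)
    (h1 : ∀ x y : V, G.dist x y ≤ H.dist h (φ x) + H.dist h (φ y))
    (h2 : ∀ x : V, ∃ y : V, H.dist h (φ x) + H.dist h (φ y) = G.dist x y) :
    ∃ v : V, H.dist h (φ v) ≤ α :=
  hG.exists_le_of_tight (fun x => H.dist h (φ x)) h1 h2

/-- Converse direction of the injective-hull characterization: if G is
α-weakly-Helly and h is a vertex of the Helly graph H ⊇ G whose distance vector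
to G satisfies the tight-span conditions, then h is within distance α of some
vertex of G. -/
theorem close_real_vertex_of_weaklyHelly [Fintype V] {W : Type*} [Fintype W]
    (G : SimpleGraph V) (H : SimpleGraph W) (hcG : G.Connected) (hcH : H.Connected)
    (hH : WeaklyHelly H 0) (φ : V → W)
    (hiso : ∀ x y : V, H.dist (φ x) (φ y) = G.dist x y)
    (α : ℕ) (hG : WeaklyHelly G α) (h : W)
    (h1 : ∀ x y : V, G.dist x y ≤ H.dist h (φ x) + H.dist h (φ y))
    (h2 : ∀ x : V, ∃ y : V, H.dist h (φ x) + H.dist h (φ y) = G.dist x y) :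
    ∃ v : V, H.dist h (φ v) ≤ α :=
  close_real_vertex_of_weaklyHelly_general G H φ α hG h h1 h2
end

section
/- In any graph G, if u and v both lie on shortest paths between x and y at the same distance from x (i.e., u,v ∈ S_k(x,y)), then d(u,v) ≤ 2δ(G), where δ(G) is the Gromov hyperbolicity of G. Hence κ(G) ≤ 2δ(G). -/
open SimpleGraph

variable {V : Type*}

lemma dist_add_dist_eq_of_mem_slice {G : SimpleGraph V} {x y u v : V} {k : ℕ}
    (hu : G.dist x u = k) (hv : G.dist x v = k)
    (hvy : G.dist x v + G.dist v y = G.dist x y) :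
    G.dist x u + G.dist v y = G.dist x y := by
  rw [hu, ← hv, hvy]

theorem slice_thin_of_hyperbolic_general (G : SimpleGraph V)
    (δ : ℕ)
    (hδ : ∀ a b c d : V, G.dist a b + G.dist c d ≤
      max (G.dist a c + G.dist b d) (G.dist a d + G.dist b c) + 2 * δ)
    (x y u v : V) (k : ℕ)
    (hu1 : G.dist x u = k) (hu2 : G.dist x u + G.dist u y = G.dist x y)
    (hv1 : G.dist x v = k) (hv2 : G.dist x v + G.dist v y = G.dist x y) :
    G.dist u v ≤ 2 * δ := by
  -- Both competing sums in the four-point condition for `u, v, x, y` equal `d(x,y)`.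
  have hux : G.dist u x + G.dist v y = G.dist x y := by
    rw [G.dist_comm, dist_add_dist_eq_of_mem_slice hu1 hv1 hv2]
  have hvx : G.dist u y + G.dist v x = G.dist x y := by
    rw [add_comm, G.dist_comm, dist_add_dist_eq_of_mem_slice hv1 hu1 hu2]
  have h := hδ u v x y
  rw [hux, hvx, max_self] at h
  omega

/-- If G is δ-hyperbolic (Gromov four-point condition), then any two vertices
lying on shortest (x,y)-paths at the same distance k from x are at distance at
most 2δ from each other; hence the interval thinness κ(G) ≤ 2δ(G). -/
theorem slice_thin_of_hyperbolic [Fintype V] (G : SimpleGraph V) (hc : G.Connected)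
    (δ : ℕ)
    (hδ : ∀ a b c d : V, G.dist a b + G.dist c d ≤
      max (G.dist a c + G.dist b d) (G.dist a d + G.dist b c) + 2 * δ)
    (x y u v : V) (k : ℕ)
    (hu1 : G.dist x u = k) (hu2 : G.dist x u + G.dist u y = G.dist x y)
    (hv1 : G.dist x v = k) (hv2 : G.dist x v + G.dist v y = G.dist x y) :
    G.dist u v ≤ 2 * δ :=
  slice_thin_of_hyperbolic_general G δ hδ x y u v k hu1 hu2 hv1 hv2
end

section
/- Let G+x be obtained from a graph G by adding a new vertex x adjacent only to a fixed vertex v ∈ V(G). Then G is α-weakly-Helly if and only if G+x is α-weakly-Helly; in particular the Helly-gap satisfies α(G) = α(G+x). -/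
/-!
Distances between vertices of `G` are the same in `G + x`, and `d(x, u) = d(v, u) + 1`. Hence a
disk `D(x, k)` with `k ≥ 1` meets `G` in `D(v, k - 1)`, so a pairwise intersecting family in
`G + x` becomes one in `G` (if `k = 0`, the vertex `x` itself is a common point). Conversely, a
common point `x` of inflated disks centred in `G` may be replaced by `v`.
-/

open SimpleGraph

variable {V : Type*}

/-- The graph G + x obtained by adding a pendant vertex (the value none)
adjacent only to the fixed vertex v of G. -/
def pendant (G : SimpleGraph V) (v : V) : SimpleGraph (Option V) where
  Adj a b :=
    match a, b with
    | some u, some w => G.Adj u w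
    | some u, none => u = v
    | none, some w => w = v
    | none, none => False
  symm := by
    constructor
    intro a b h
    match a, b with
    | some u, some w => exact (h : G.Adj u w).symm
    | some u, none => exact h
    | none, some w => exact h
    | none, none => exact h
  loopless := by
    constructor
    intro a h
    match a with
    | some u => exact (G.loopless.irrefl u) h
    | none => exact h

namespace SimpleGraph

variable {W : Type*} {G : SimpleGraph V} {H : SimpleGraph W}

theorem Reachable.dist_map_le (hH : H.Connected) {f : V → W}
    (hf : ∀ ⦃a b⦄, G.Adj a b → H.dist (f a) (f b) ≤ 1) {a b : V} (hab : G.Reachable a b) :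
    H.dist (f a) (f b) ≤ G.dist a b := by
  obtain ⟨p, hp⟩ := hab.exists_walk_length_eq_dist
  rw [← hp]
  clear hp hab
  induction p with
  | nil => simp
  | @cons x y z hxy q ih =>
    calc H.dist (f x) (f z) ≤ H.dist (f x) (f y) + H.dist (f y) (f z) := hH.dist_triangle
      _ ≤ 1 + q.length := add_le_add (hf hxy) ih
      _ = (Walk.cons hxy q).length := by rw [Walk.length_cons, add_comm]

end SimpleGraph

/-- Merging disks with equal centers into the smallest of them reduces an indexed family of disks
to a set of centers. -/
theorem WeaklyHelly.exists_center {G : SimpleGraph V} {α : ℕ} (h : WeaklyHelly G α)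
    {ι : Type*} (c : ι → V) (r : ι → ℕ) (hr : ∀ i j, G.dist (c i) (c j) ≤ r i + r j) :
    ∃ z, ∀ i, G.dist (c i) z ≤ r i + α := by
  let ρ : V → ℕ := fun u => sInf (r '' (c ⁻¹' {u}))
  have hρ_le : ∀ i, ρ (c i) ≤ r i := fun i => Nat.sInf_le ⟨i, rfl, rfl⟩
  have hρ_mem : ∀ i, ∃ j, c j = c i ∧ r j = ρ (c i) := fun i =>
    Nat.sInf_mem (s := r '' (c ⁻¹' {c i})) ⟨r i, i, rfl, rfl⟩
  obtain ⟨z, hz⟩ := h (Set.range c) ρ <| by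
    rintro _ ⟨i, rfl⟩ _ ⟨j, rfl⟩
    obtain ⟨i', hi', hri'⟩ := hρ_mem i
    obtain ⟨j', hj', hrj'⟩ := hρ_mem j
    simpa only [hi', hj', hri', hrj'] using hr i' j'
  exact ⟨z, fun i => (hz (c i) ⟨i, rfl⟩).trans (by grw [hρ_le i])⟩

section Pendant

variable {G : SimpleGraph V} {v : V}

lemma pendant_reachable_some (hc : G.Connected) :
    ∀ a : Option V, (pendant G v).Reachable a (some v)
  | none => (show (pendant G v).Adj none (some v) from rfl).reachable
  | some u => (hc.preconnected u v).map ⟨some, fun h => h⟩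

lemma pendant_connected (hc : G.Connected) : (pendant G v).Connected :=
  Connected.mk fun a b => (pendant_reachable_some hc a).trans (pendant_reachable_some hc b).symm

lemma dist_getD_le_pendant_dist (hc : G.Connected) (a b : Option V) :
    G.dist (a.getD v) (b.getD v) ≤ (pendant G v).dist a b := by
  refine ((pendant_connected hc).preconnected a b).dist_map_le (f := (Option.getD · v)) hc ?_
  rintro (_ | u) (_ | w) hab
  · exact absurd hab id
  · cases (hab : w = v); simp
  · cases (hab : u = v); simp
  · exact (G.dist_eq_one_iff_adj.2 hab).le

lemma pendant_dist_some_some (hc : G.Connected) (u w : V) :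
    (pendant G v).dist (some u) (some w) = G.dist u w :=
  le_antisymm ((hc.preconnected u w).dist_map_le (f := some) (pendant_connected hc)
      fun _ _ h => ((pendant G v).dist_eq_one_iff_adj.2 h).le)
    (dist_getD_le_pendant_dist hc (some u) (some w))

lemma pendant_dist_none_some (hc : G.Connected) (u : V) :
    (pendant G v).dist none (some u) = G.dist v u + 1 := by
  refine le_antisymm ?_ ?_
  · calc (pendant G v).dist none (some u)
        ≤ (pendant G v).dist none (some v) + (pendant G v).dist (some v) (some u) :=
          (pendant_connected hc).dist_triangle
      _ = G.dist v u + 1 := by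
          rw [dist_eq_one_iff_adj.2 (show (pendant G v).Adj none (some v) from rfl),
            pendant_dist_some_some hc, add_comm]
  · obtain ⟨p, hp⟩ := (pendant_connected hc).exists_walk_length_eq_dist none (some u)
    rw [← hp]
    cases p with
    | @cons _ y _ hadj q =>
      rcases y with _ | w
      · exact absurd hadj id
      · cases (hadj : w = v)
        exact Nat.succ_le_succ (pendant_dist_some_some hc v u ▸ dist_le q)

theorem weaklyHelly_of_weaklyHelly_pendant (hc : G.Connected) {α : ℕ}
    (h : WeaklyHelly (pendant G v) α) : WeaklyHelly G α := by
  intro S r hS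
  obtain ⟨z, hz⟩ := h.exists_center (fun u : S => some (u : V)) (fun u => r u)
    fun u w => by simpa only [pendant_dist_some_some hc] using hS u u.2 w w.2
  exact ⟨z.getD v, fun u hu => (dist_getD_le_pendant_dist hc (some u) z).trans (hz ⟨u, hu⟩)⟩

theorem weaklyHelly_pendant_of_weaklyHelly (hc : G.Connected) {α : ℕ} (h : WeaklyHelly G α) :
    WeaklyHelly (pendant G v) α := by
  intro S r hS
  by_cases h0 : none ∈ S ∧ r none = 0
  · exact ⟨none, fun a ha => (hS a ha none h0.1).trans (by omega)⟩
  have hpos : none ∈ S → 1 ≤ r none := fun hn => Nat.one_le_iff_ne_zero.2 fun h => h0 ⟨hn, h⟩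
  have hd_none := pendant_dist_none_some hc (v := v)
  have hd_some := pendant_dist_some_some hc (v := v)
  obtain ⟨z, hz⟩ := h.exists_center (fun a : S => (a : Option V).getD v)
      (fun a => (a : Option V).elim (r none - 1) (r ∘ some)) <| by
    rintro ⟨_ | u, hu⟩ ⟨_ | w, hw⟩
    · simp
    · have hnw := hS _ hu _ hw
      rw [hd_none] at hnw
      have := hpos hu
      simp only [Option.getD_none, Option.getD_some, Option.elim_none, Option.elim_some,
        Function.comp_apply]
      omega
    · have hun := hS _ hu _ hw
      rw [SimpleGraph.dist_comm, hd_none] at hun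
      have := hpos hw
      simp only [Option.getD_none, Option.getD_some, Option.elim_none, Option.elim_some,
        Function.comp_apply, G.dist_comm (u := u)]
      omega
    · exact (hd_some u w).symm.trans_le (hS _ hu _ hw)
  refine ⟨some z, ?_⟩
  rintro (_ | u) ha
  · have hvz := hz ⟨none, ha⟩
    have := hpos ha
    simp only [Option.getD_none, Option.elim_none] at hvz
    rw [hd_none]
    omega
  · exact (hd_some u z).trans_le (hz ⟨some u, ha⟩)

end Pendant

theorem weaklyHelly_pendant_general (G : SimpleGraph V) (hc : G.Connected)
    (v : V) :
    (∀ α : ℕ, WeaklyHelly G α ↔ WeaklyHelly (pendant G v) α) ∧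
      hellyGap G = hellyGap (pendant G v) := by
  have key : ∀ α : ℕ, WeaklyHelly G α ↔ WeaklyHelly (pendant G v) α :=
    fun _ => ⟨weaklyHelly_pendant_of_weaklyHelly hc, weaklyHelly_of_weaklyHelly_pendant hc⟩
  exact ⟨key, congrArg sInf (Set.ext key)⟩

/-- Adding a pendant vertex preserves the α-weakly-Helly property for every α,
and hence preserves the Helly-gap. -/
theorem weaklyHelly_pendant [Fintype V] (G : SimpleGraph V) (hc : G.Connected)
    (v : V) :
    (∀ α : ℕ, WeaklyHelly G α ↔ WeaklyHelly (pendant G v) α) ∧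
      hellyGap G = hellyGap (pendant G v) :=
  weaklyHelly_pendant_general G hc v
end
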